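/- arXiv:1810.13174 — 2 statements merged into one kernel-verified Lean document; each statement's English description precedes it below -/
import Mathlib

section
/- Assume k² + λ₁λ₂ ≠ 0 and k² − λ₁λ₂ ≠ 0, and let δ ≥ 0. Setting X = ((k² + λ₁λ₂)/(k² − λ₁λ₂))(e^{−λ₁δ} − e^{−λ₂δ}), the Schwarz iteration matrix R_δ = M_δ⁻¹ N_δ N_0⁻¹ M_0 satisfies trace(R_δ) = X² + 2e^{−δ(λ₁+λ₂)} and det(R_δ) = e^{−2δ(λ₁+λ₂)}. -/
open Complex Matrix

/-- The matrix `M_x` whose columns are the two bounded-at `-∞` exponential solutions. -/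
noncomputable def Mmat (l1 l2 : ℂ) (k : ℝ) (x : ℝ) : Matrix (Fin 2) (Fin 2) ℂ :=
  !![Complex.exp (l1 * x), -(Complex.I * l2 / (k : ℂ)) * Complex.exp (l2 * x);
     (Complex.I * l1 / (k : ℂ)) * Complex.exp (l1 * x), Complex.exp (l2 * x)]

/-- The matrix `N_x` whose columns are the two bounded-at `+∞` exponential solutions. -/
noncomputable def Nmat (l1 l2 : ℂ) (k : ℝ) (x : ℝ) : Matrix (Fin 2) (Fin 2) ℂ :=
  !![Complex.exp (-l1 * x), (Complex.I * l2 / (k : ℂ)) * Complex.exp (-l2 * x);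
     -(Complex.I * l1 / (k : ℂ)) * Complex.exp (-l1 * x), Complex.exp (-l2 * x)]

/-!
Writing `E_x = diag(e^{-λ₁x}, e^{-λ₂x})`, one has `M_x = M_0 E_x⁻¹` and `N_x = N_0 E_x`, so
`R_δ = E_δ S E_δ S⁻¹` with `S = M_0⁻¹ N_0`. An explicit computation shows `det S = 1` and that both
diagonal entries of `S` equal `(k² + λ₁λ₂)/(k² − λ₁λ₂)`. For any `2 × 2` matrix `S` of determinant one,
`tr(D S D S⁻¹) = S₀₀ S₁₁ (u − v)² + 2uv` when `D = diag(u, v)`, and `det(D S D S⁻¹) = (det D)²`.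
-/

namespace Matrix

variable {R : Type*} [CommRing R]

theorem trace_diagonal_mul_mul_diagonal_mul_inv_of_det_eq_one (S : Matrix (Fin 2) (Fin 2) R)
    (hS : S.det = 1) (u v : R) :
    (diagonal ![u, v] * S * diagonal ![u, v] * S⁻¹).trace
      = S 0 0 * S 1 1 * (u - v) ^ 2 + 2 * u * v := by
  rw [inv_def, hS, Ring.inverse_one, one_smul, adjugate_fin_two, trace_fin_two]
  rw [det_fin_two] at hS
  simp only [mul_apply, Fin.sum_univ_two, diagonal_apply_eq, diagonal_apply_ne, ne_eq,
    zero_ne_one, one_ne_zero, not_false_eq_true, of_apply, cons_val', cons_val_zero, cons_val_one,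
    cons_val_fin_one, zero_mul, mul_zero, add_zero, zero_add, mul_neg]
  linear_combination (2 * u * v) * hS

theorem det_mul_mul_mul_nonsing_inv {n : Type*} [Fintype n] [DecidableEq n]
    (A B S : Matrix n n R) (hS : IsUnit S.det) :
    (A * S * B * S⁻¹).det = A.det * B.det := by
  rw [det_mul, det_mul, det_mul, det_nonsing_inv, mul_right_comm _ S.det,
    mul_assoc _ S.det, Ring.mul_inverse_cancel _ hS, mul_one]

end Matrix

noncomputable def expDiag (l1 l2 : ℂ) (x : ℝ) : Matrix (Fin 2) (Fin 2) ℂ :=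
  diagonal ![Complex.exp (-l1 * x), Complex.exp (-l2 * x)]

section

variable {l1 l2 : ℂ} {k : ℝ}

theorem det_expDiag (x : ℝ) : (expDiag l1 l2 x).det = Complex.exp (-(x : ℂ) * (l1 + l2)) := by
  rw [expDiag, det_diagonal, Fin.prod_univ_two]
  simp only [cons_val_zero, cons_val_one, ← Complex.exp_add]
  ring_nf

theorem inv_expDiag_neg (x : ℝ) : (expDiag l1 l2 (-x))⁻¹ = expDiag l1 l2 x := by
  refine inv_eq_left_inv ?_
  rw [expDiag, expDiag, diagonal_mul_diagonal, ← diagonal_one]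
  congr 1
  ext i
  fin_cases i <;> simp [← Complex.exp_add]

theorem Mmat_eq_mul_expDiag (x : ℝ) : Mmat l1 l2 k x = Mmat l1 l2 k 0 * expDiag l1 l2 (-x) := by
  ext i j
  fin_cases i <;> fin_cases j <;> simp [Mmat, expDiag]

theorem Nmat_eq_mul_expDiag (x : ℝ) : Nmat l1 l2 k x = Nmat l1 l2 k 0 * expDiag l1 l2 x := by
  ext i j
  fin_cases i <;> fin_cases j <;> simp [Nmat, expDiag]

theorem det_Mmat_zero : (Mmat l1 l2 k 0).det = 1 - l1 * l2 / (k : ℂ) ^ 2 := by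
  simp only [Mmat, det_fin_two_of, Complex.ofReal_zero, mul_zero, Complex.exp_zero, mul_one]
  linear_combination (l1 * l2 / (k : ℂ) ^ 2) * Complex.I_sq

theorem inv_Mmat_zero_mul_Nmat_zero (hk : k ≠ 0) (h : (k : ℂ) ^ 2 - l1 * l2 ≠ 0) :
    (Mmat l1 l2 k 0)⁻¹ * Nmat l1 l2 k 0 = ((k : ℂ) ^ 2 - l1 * l2)⁻¹ •
      !![(k : ℂ) ^ 2 + l1 * l2, 2 * Complex.I * l2 * k;
         -(2 * Complex.I * l1 * k), (k : ℂ) ^ 2 + l1 * l2] := by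
  rw [inv_def (Mmat l1 l2 k 0), Ring.inverse_eq_inv', det_Mmat_zero, adjugate_fin_two]
  have hK : (k : ℂ) ≠ 0 := by exact_mod_cast hk
  ext i j
  fin_cases i <;> fin_cases j <;>
    simp only [Mmat, Nmat, mul_apply, Fin.sum_univ_two, Matrix.smul_apply, smul_eq_mul, of_apply,
      cons_val', cons_val_zero, cons_val_one, cons_val_fin_one, Fin.zero_eta, Fin.mk_one,
      ofReal_zero, mul_zero, exp_zero, mul_one, neg_neg, mul_neg, neg_mul] <;> field_simp <;>
    ring_nf <;> simp [Complex.I_sq]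

theorem isUnit_det_Mmat_zero (hk : k ≠ 0) (h : (k : ℂ) ^ 2 - l1 * l2 ≠ 0) :
    IsUnit (Mmat l1 l2 k 0).det := by
  have hK : (k : ℂ) ^ 2 ≠ 0 := pow_ne_zero 2 (by exact_mod_cast hk)
  rw [det_Mmat_zero, isUnit_iff_ne_zero, one_sub_div hK]
  exact div_ne_zero h hK

theorem det_inv_Mmat_zero_mul_Nmat_zero (hk : k ≠ 0) (h : (k : ℂ) ^ 2 - l1 * l2 ≠ 0) :
    ((Mmat l1 l2 k 0)⁻¹ * Nmat l1 l2 k 0).det = 1 := by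
  rw [inv_Mmat_zero_mul_Nmat_zero hk h, det_smul, Fintype.card_fin, det_fin_two_of]
  field_simp
  linear_combination (4 * l1 * l2 * (k : ℂ) ^ 2) * Complex.I_sq

theorem schwarz_iteration_matrix_eq_expDiag_conj (hk : k ≠ 0) (h : (k : ℂ) ^ 2 - l1 * l2 ≠ 0)
    (δ : ℝ) :
    (Mmat l1 l2 k δ)⁻¹ * Nmat l1 l2 k δ * (Nmat l1 l2 k 0)⁻¹ * Mmat l1 l2 k 0
      = expDiag l1 l2 δ * ((Mmat l1 l2 k 0)⁻¹ * Nmat l1 l2 k 0) * expDiag l1 l2 δ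
          * ((Mmat l1 l2 k 0)⁻¹ * Nmat l1 l2 k 0)⁻¹ := by
  rw [Mmat_eq_mul_expDiag δ, Nmat_eq_mul_expDiag δ, Matrix.mul_inv_rev, inv_expDiag_neg,
    Matrix.mul_inv_rev, nonsing_inv_nonsing_inv _ (isUnit_det_Mmat_zero hk h)]
  simp only [Matrix.mul_assoc]

end

theorem schwarz_iteration_matrix_trace_det_general
    (k : ℝ) (hk : k ≠ 0)
    (l1 l2 : ℂ)
    (hadmm : (k : ℂ) ^ 2 - l1 * l2 ≠ 0)
    (δ : ℝ)
    (X : ℂ)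
    (hX : X = ((k : ℂ) ^ 2 + l1 * l2) / ((k : ℂ) ^ 2 - l1 * l2)
              * (Complex.exp (-l1 * δ) - Complex.exp (-l2 * δ))) :
    ((Mmat l1 l2 k δ)⁻¹ * Nmat l1 l2 k δ * (Nmat l1 l2 k 0)⁻¹ * Mmat l1 l2 k 0).trace
        = X ^ 2 + 2 * Complex.exp (-(δ : ℂ) * (l1 + l2))
      ∧ ((Mmat l1 l2 k δ)⁻¹ * Nmat l1 l2 k δ * (Nmat l1 l2 k 0)⁻¹ * Mmat l1 l2 k 0).det
        = Complex.exp (-2 * (δ : ℂ) * (l1 + l2)) := by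
  have hdet := det_inv_Mmat_zero_mul_Nmat_zero hk hadmm
  rw [schwarz_iteration_matrix_eq_expDiag_conj hk hadmm]
  constructor
  · rw [expDiag, trace_diagonal_mul_mul_diagonal_mul_inv_of_det_eq_one _ hdet,
      inv_Mmat_zero_mul_Nmat_zero hk hadmm, hX]
    simp only [Matrix.smul_apply, of_apply, cons_val', cons_val_zero, cons_val_one, cons_val_fin_one,
      smul_eq_mul]
    rw [mul_assoc 2, ← Complex.exp_add]
    ring_nf
  · rw [det_mul_mul_mul_nonsing_inv _ _ _ (hdet ▸ isUnit_one), det_expDiag, ← Complex.exp_add]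
    ring_nf

/-- with `X = ((k²+λ₁λ₂)/(k²−λ₁λ₂))(e^{−λ₁δ} − e^{−λ₂δ})`, the Schwarz
iteration matrix `R_δ = M_δ⁻¹ N_δ N_0⁻¹ M_0` satisfies
`trace R_δ = X² + 2 e^{−δ(λ₁+λ₂)}` and `det R_δ = e^{−2δ(λ₁+λ₂)}`. -/
theorem schwarz_iteration_matrix_trace_det
    (μ lam ρ ω : ℝ) (hμ : 0 < μ) (hlam : 0 < lam) (hρ : 0 < ρ) (hω : 0 < ω)
    (Cp Cs : ℝ) (hCp : Cp = Real.sqrt ((lam + 2 * μ) / ρ)) (hCs : Cs = Real.sqrt (μ / ρ))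
    (k : ℝ) (hk : k ≠ 0)
    (l1 l2 : ℂ)
    (hl1 : l1 = ((k ^ 2 - ω ^ 2 / Cs ^ 2 : ℝ) : ℂ) ^ (1 / 2 : ℂ))
    (hl2 : l2 = ((k ^ 2 - ω ^ 2 / Cp ^ 2 : ℝ) : ℂ) ^ (1 / 2 : ℂ))
    (hadmp : (k : ℂ) ^ 2 + l1 * l2 ≠ 0) (hadmm : (k : ℂ) ^ 2 - l1 * l2 ≠ 0)
    (δ : ℝ) (hδ : 0 ≤ δ)
    (X : ℂ)
    (hX : X = ((k : ℂ) ^ 2 + l1 * l2) / ((k : ℂ) ^ 2 - l1 * l2)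
              * (Complex.exp (-l1 * δ) - Complex.exp (-l2 * δ))) :
    ((Mmat l1 l2 k δ)⁻¹ * Nmat l1 l2 k δ * (Nmat l1 l2 k 0)⁻¹ * Mmat l1 l2 k 0).trace
        = X ^ 2 + 2 * Complex.exp (-(δ : ℂ) * (l1 + l2))
      ∧ ((Mmat l1 l2 k δ)⁻¹ * Nmat l1 l2 k δ * (Nmat l1 l2 k 0)⁻¹ * Mmat l1 l2 k 0).det
        = Complex.exp (-2 * (δ : ℂ) * (l1 + l2)) :=
  schwarz_iteration_matrix_trace_det_general k hk l1 l2 hadmm δ X hX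
end

section
/- For every Fourier frequency k with 0 ≤ k ≤ ω/Cp (where admissibility k² ± λ₁λ₂ ≠ 0 holds), as well as for k = ω/Cs, there exists δ₀ > 0 such that for all overlaps δ with 0 < δ < δ₀, the convergence factor of the classical Schwarz method satisfies ρ_cla(k, ω, Cp, Cs, δ) = 1 (stagnation of the low frequencies). -/
open Complex

/-- The convergence factor `ρ_cla(k, ω, Cp, Cs, δ) = max(|r₊|, |r₋|)` of the classical
Schwarz method for the time-harmonic Navier equations, where
`r± = X²/2 + e^{−δ(λ₁+λ₂)} ± (1/2)√(X²(X² + 4e^{−δ(λ₁+λ₂)}))`,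
`X = ((k² + λ₁λ₂)/(k² − λ₁λ₂))(e^{−λ₁δ} − e^{−λ₂δ})`,
`λ₁ = √(k² − ω²/Cs²)`, `λ₂ = √(k² − ω²/Cp²)` (principal complex square roots). -/
noncomputable def rhoCla (Cp Cs ω k δ : ℝ) : ℝ :=
  let l1 : ℂ := ((k ^ 2 - ω ^ 2 / Cs ^ 2 : ℝ) : ℂ) ^ (1 / 2 : ℂ)
  let l2 : ℂ := ((k ^ 2 - ω ^ 2 / Cp ^ 2 : ℝ) : ℂ) ^ (1 / 2 : ℂ)
  let X : ℂ := ((k : ℂ) ^ 2 + l1 * l2) / ((k : ℂ) ^ 2 - l1 * l2)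
      * (Complex.exp (-l1 * δ) - Complex.exp (-l2 * δ))
  let E : ℂ := Complex.exp (-(δ : ℂ) * (l1 + l2))
  let s : ℂ := (X ^ 2 * (X ^ 2 + 4 * E)) ^ (1 / 2 : ℂ)
  max ‖X ^ 2 / 2 + E + s / 2‖ ‖X ^ 2 / 2 + E - s / 2‖

/-!
The roots `r±` depend on `X` only through `X²`. For `0 ≤ k ≤ ω/Cp` both `λⱼ = i bⱼ` are
imaginary, so `|E| = 1` and `X² = -4 C² sin² ((b₂ - b₁) δ / 2) E` with
`C = (k² - b₁b₂)/(k² + b₁b₂)` real. For small `δ` this is `X² = t E` with `-4 ≤ t ≤ 0`, and then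
`r± / E = 1 + t/2 ± i √(-t(t+4)) / 2` lie on the unit circle. For `k = ω/Cs` we have `λ₁ = 0`,
hence `X = 1 - q` and `E = q` with `q = e^{-λ₂δ}`, `|q| ≤ 1`, and the roots are `1` and `q²`.
-/

lemma cpow_one_div_two_sq (z : ℂ) : (z ^ (1 / 2 : ℂ)) ^ 2 = z := by
  simp [one_div]

lemma re_cpow_one_div_two_nonneg (z : ℂ) : 0 ≤ (z ^ (1 / 2 : ℂ)).re := by
  rw [one_div, cpow_inv_two_re]
  exact Real.sqrt_nonneg _

open scoped ComplexOrder in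
lemma ofReal_cpow_one_div_two_of_nonpos {x : ℝ} (hx : x ≤ 0) :
    (x : ℂ) ^ (1 / 2 : ℂ) = √(-x) * I := by
  have hnonneg : (0 : ℂ) ≤ ((-x : ℝ) : ℂ) := zero_le_real.2 (neg_nonneg.2 hx)
  have := Complex.sqrt_neg_of_nonneg hnonneg
  rw [Complex.sqrt_of_nonneg hnonneg, ofReal_re, ofReal_neg, neg_neg, Complex.sqrt] at this
  rw [one_div, this, mul_comm]

lemma sq_exp_sub_exp (x y : ℂ) :
    (exp x - exp y) ^ 2 = 4 * sinh ((x - y) / 2) ^ 2 * exp (x + y) := by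
  have hx : exp x = exp ((x + y) / 2) * exp ((x - y) / 2) := by rw [← exp_add]; ring_nf
  have hy : exp y = exp ((x + y) / 2) * exp (-((x - y) / 2)) := by rw [← exp_add]; ring_nf
  have hxy : exp (x + y) = exp ((x + y) / 2) ^ 2 := by rw [← exp_nat_mul]; ring_nf
  rw [sinh, hx, hy, hxy]
  ring

/-- `max (‖r₊‖, ‖r₋‖)`, where `r±` are the two roots of `r² - (X² + 2E) r + E² = 0`. -/
noncomputable def maxRootNorm (X E : ℂ) : ℝ :=
  max ‖X ^ 2 / 2 + E + (X ^ 2 * (X ^ 2 + 4 * E)) ^ (1 / 2 : ℂ) / 2‖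
    ‖X ^ 2 / 2 + E - (X ^ 2 * (X ^ 2 + 4 * E)) ^ (1 / 2 : ℂ) / 2‖

lemma rhoCla_eq_maxRootNorm {Cp Cs ω k : ℝ} {l1 l2 : ℂ}
    (hl1 : l1 = ((k ^ 2 - ω ^ 2 / Cs ^ 2 : ℝ) : ℂ) ^ (1 / 2 : ℂ))
    (hl2 : l2 = ((k ^ 2 - ω ^ 2 / Cp ^ 2 : ℝ) : ℂ) ^ (1 / 2 : ℂ)) (δ : ℝ) :
    rhoCla Cp Cs ω k δ = maxRootNorm (((k : ℂ) ^ 2 + l1 * l2) / ((k : ℂ) ^ 2 - l1 * l2)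
      * (exp (-l1 * δ) - exp (-l2 * δ))) (exp (-(δ : ℂ) * (l1 + l2))) := by
  subst hl1 hl2
  rfl

lemma maxRootNorm_eq_of_sq_eq {X E w : ℂ} (hw : w ^ 2 = X ^ 2 * (X ^ 2 + 4 * E)) :
    maxRootNorm X E = max ‖X ^ 2 / 2 + E + w / 2‖ ‖X ^ 2 / 2 + E - w / 2‖ := by
  rcases sq_eq_sq_iff_eq_or_eq_neg.1 ((cpow_one_div_two_sq _).trans hw.symm) with h | h
  · rw [maxRootNorm, h]
  · rw [maxRootNorm, h, neg_div, ← sub_eq_add_neg, sub_neg_eq_add, max_comm]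

lemma maxRootNorm_eq_one_of_sq_eq_mul {X E : ℂ} {t : ℝ} (hE : ‖E‖ = 1) (hX : X ^ 2 = t * E)
    (ht : t ∈ Set.Icc (-4) 0) : maxRootNorm X E = 1 := by
  obtain ⟨ht4, ht0⟩ := ht
  set σ := √(-(t * (t + 4))) / 2 with hσ_def
  have hσ_sq : 4 * σ ^ 2 = -(t * (t + 4)) := by
    rw [hσ_def, div_pow, Real.sq_sqrt (by nlinarith)]
    ring
  have hnorm : ∀ s : ℝ, s ^ 2 = σ ^ 2 → ‖E * ((t / 2 + 1 : ℝ) + s * I)‖ = 1 := by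
    intro s hs
    rw [norm_mul, hE, norm_add_mul_I, hs, one_mul, Real.sqrt_eq_one]
    linear_combination hσ_sq / 4
  have hw : (2 * σ * I * E) ^ 2 = X ^ 2 * (X ^ 2 + 4 * E) := by
    rw [hX]
    have hσ_sq' : 4 * (σ : ℂ) ^ 2 = -(t * (t + 4)) := by exact_mod_cast hσ_sq
    linear_combination (4 * (σ : ℂ) ^ 2 * E ^ 2) * I_sq - E ^ 2 * hσ_sq'
  have hplus : X ^ 2 / 2 + E + 2 * σ * I * E / 2 = E * ((t / 2 + 1 : ℝ) + σ * I) := by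
    rw [hX]; push_cast; ring
  have hminus : X ^ 2 / 2 + E - 2 * σ * I * E / 2 = E * ((t / 2 + 1 : ℝ) + (-σ : ℝ) * I) := by
    rw [hX]; push_cast; ring
  rw [maxRootNorm_eq_of_sq_eq hw, hplus, hminus, hnorm σ rfl, hnorm (-σ) (neg_sq σ), max_self]

lemma maxRootNorm_one_sub_self {q : ℂ} (hq : ‖q‖ ≤ 1) : maxRootNorm (1 - q) q = 1 := by
  have hw : ((1 - q) * (1 + q)) ^ 2 = (1 - q) ^ 2 * ((1 - q) ^ 2 + 4 * q) := by ring
  have hplus : (1 - q) ^ 2 / 2 + q + (1 - q) * (1 + q) / 2 = 1 := by ring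
  have hminus : (1 - q) ^ 2 / 2 + q - (1 - q) * (1 + q) / 2 = q ^ 2 := by ring
  rw [maxRootNorm_eq_of_sq_eq hw, hplus, hminus, norm_one, norm_pow]
  exact max_eq_left (pow_le_one₀ (norm_nonneg q) hq)

lemma maxRootNorm_eq_one_of_imaginary {a b C δ : ℝ} (hδ : |C| * |(b - a) * δ| ≤ 2) :
    maxRootNorm (C * (exp (-(a * I) * δ) - exp (-(b * I) * δ)))
      (exp (-(δ : ℂ) * (a * I + b * I))) = 1 := by
  set θ := (b - a) * δ / 2 with hθ
  have hE : ‖exp (-(δ : ℂ) * (a * I + b * I))‖ = 1 := by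
    rw [show -(δ : ℂ) * (a * I + b * I) = ((-(δ * (a + b)) : ℝ) : ℂ) * I by push_cast; ring]
    exact norm_exp_ofReal_mul_I _
  have hsinh : sinh ((-(a * I) * δ - -(b * I) * δ) / 2) = sin (θ : ℂ) * I := by
    rw [show (-(a * I) * δ - -(b * I) * δ) / 2 = (θ : ℂ) * I by simp only [hθ]; push_cast; ring,
      sinh_mul_I]
  have hX : ((C : ℂ) * (exp (-(a * I) * δ) - exp (-(b * I) * δ))) ^ 2
      = ((-4 * (C * Real.sin θ) ^ 2 : ℝ) : ℂ) * exp (-(δ : ℂ) * (a * I + b * I)) := by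
    rw [mul_pow, sq_exp_sub_exp, hsinh, show -(a * I) * δ + -(b * I) * δ
      = -(δ : ℂ) * (a * I + b * I) by ring]
    push_cast
    linear_combination (4 * (C : ℂ) ^ 2 * sin (θ : ℂ) ^ 2
      * exp (-(δ : ℂ) * (a * I + b * I))) * I_sq
  have hCsin : |C * Real.sin θ| ≤ 1 := by
    calc |C * Real.sin θ| ≤ |C| * |θ| := by
          rw [abs_mul]; exact mul_le_mul_of_nonneg_left Real.abs_sin_le_abs (abs_nonneg C)
      _ ≤ 1 := by rw [hθ, abs_div, abs_two]; linarith
  refine maxRootNorm_eq_one_of_sq_eq_mul hE hX ⟨?_, by nlinarith [sq_nonneg (C * Real.sin θ)]⟩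
  nlinarith [sq_abs (C * Real.sin θ), abs_nonneg (C * Real.sin θ)]

lemma exists_maxRootNorm_eq_one_of_imaginary (k a b : ℝ) :
    ∃ δ₀ > (0 : ℝ), ∀ δ : ℝ, 0 < δ → δ < δ₀ →
      maxRootNorm (((k : ℂ) ^ 2 + a * I * (b * I)) / ((k : ℂ) ^ 2 - a * I * (b * I))
        * (exp (-(a * I) * δ) - exp (-(b * I) * δ))) (exp (-(δ : ℂ) * (a * I + b * I))) = 1 := by
  set C := (k ^ 2 - a * b) / (k ^ 2 + a * b)
  have hC : ((k : ℂ) ^ 2 + a * I * (b * I)) / ((k : ℂ) ^ 2 - a * I * (b * I)) = C := by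
    simp only [C, ofReal_div, ofReal_sub, ofReal_add, ofReal_mul, ofReal_pow]
    congr 1
    · linear_combination (a * b : ℂ) * I_sq
    · linear_combination -(a * b : ℂ) * I_sq
  refine ⟨2 / (|C| * |b - a| + 1), by positivity, fun δ hδ hδ₀ => ?_⟩
  rw [hC]
  apply maxRootNorm_eq_one_of_imaginary
  rw [lt_div_iff₀ (by positivity)] at hδ₀
  rw [abs_mul, abs_of_pos hδ]
  nlinarith [mul_nonneg (abs_nonneg C) (abs_nonneg (b - a))]

lemma maxRootNorm_eq_one_at_shear_cutoff {κ l : ℂ} (hκ : κ ≠ 0) (hl : 0 ≤ l.re) {δ : ℝ}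
    (hδ : 0 ≤ δ) :
    maxRootNorm ((κ + 0 * l) / (κ - 0 * l) * (exp (-0 * δ) - exp (-l * δ)))
      (exp (-(δ : ℂ) * (0 + l))) = 1 := by
  have hq : ‖exp (-l * δ)‖ ≤ 1 := by
    rw [norm_exp, Real.exp_le_one_iff, re_mul_ofReal, neg_re]
    exact mul_nonpos_of_nonpos_of_nonneg (neg_nonpos.2 hl) hδ
  convert maxRootNorm_one_sub_self hq using 2
  · simp only [zero_mul, add_zero, sub_zero, neg_zero, exp_zero, div_self hκ, one_mul]
  · ring_nf

theorem schwarz_low_frequencies_stagnate_general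
    (μ lam ρ ω : ℝ) (hμ : 0 < μ) (hlam : 0 < lam) (hρ : 0 < ρ)
    (Cp Cs : ℝ) (hCp : Cp = Real.sqrt ((lam + 2 * μ) / ρ)) (hCs : Cs = Real.sqrt (μ / ρ))
    (k : ℝ)
    (l1 l2 : ℂ)
    (hl1 : l1 = ((k ^ 2 - ω ^ 2 / Cs ^ 2 : ℝ) : ℂ) ^ (1 / 2 : ℂ))
    (hl2 : l2 = ((k ^ 2 - ω ^ 2 / Cp ^ 2 : ℝ) : ℂ) ^ (1 / 2 : ℂ))
    (hk : (0 ≤ k ∧ k ≤ ω / Cp) ∨ k = ω / Cs)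
    (hadmm : (k : ℂ) ^ 2 - l1 * l2 ≠ 0) :
    ∃ δ₀ > (0 : ℝ), ∀ δ : ℝ, 0 < δ → δ < δ₀ → rhoCla Cp Cs ω k δ = 1 := by
  have hρCla := rhoCla_eq_maxRootNorm hl1 hl2
  rcases hk with ⟨hk0, hkp⟩ | rfl
  · have hCs0 : 0 < Cs := hCs ▸ Real.sqrt_pos.2 (div_pos hμ hρ)
    have hCsp : Cs ≤ Cp :=
      hCs ▸ hCp ▸ Real.sqrt_le_sqrt (div_le_div_of_nonneg_right (by linarith) hρ.le)
    have hp : k ^ 2 - ω ^ 2 / Cp ^ 2 ≤ 0 := by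
      rw [sub_nonpos, ← div_pow]; exact pow_le_pow_left₀ hk0 hkp 2
    have hs : k ^ 2 - ω ^ 2 / Cs ^ 2 ≤ 0 := hp.trans' <| sub_le_sub_left
      (div_le_div_of_nonneg_left (sq_nonneg ω) (pow_pos hCs0 2) (pow_le_pow_left₀ hCs0.le hCsp 2)) _
    rw [ofReal_cpow_one_div_two_of_nonpos hs] at hl1
    rw [ofReal_cpow_one_div_two_of_nonpos hp] at hl2
    subst hl1 hl2
    simpa only [hρCla] using exists_maxRootNorm_eq_one_of_imaginary k _ _
  · have hl1_zero : l1 = 0 := by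
      rw [hl1, div_pow, sub_self, ofReal_zero, zero_cpow (by norm_num)]
    subst hl1_zero
    refine ⟨1, one_pos, fun δ hδ _ => ?_⟩
    rw [hρCla]
    exact maxRootNorm_eq_one_at_shear_cutoff (by simpa using hadmm)
      (hl2 ▸ re_cpow_one_div_two_nonneg _) hδ.le

/-- for low Fourier frequencies `0 ≤ k ≤ ω/Cp` (under the admissibility
conditions `k² ± λ₁λ₂ ≠ 0`), as well as for `k = ω/Cs`, the classical Schwarz method
stagnates: `ρ_cla(k, ω, Cp, Cs, δ) = 1` for all sufficiently small overlaps `δ > 0`. -/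
theorem schwarz_low_frequencies_stagnate
    (μ lam ρ ω : ℝ) (hμ : 0 < μ) (hlam : 0 < lam) (hρ : 0 < ρ) (hω : 0 < ω)
    (Cp Cs : ℝ) (hCp : Cp = Real.sqrt ((lam + 2 * μ) / ρ)) (hCs : Cs = Real.sqrt (μ / ρ))
    (k : ℝ)
    (l1 l2 : ℂ)
    (hl1 : l1 = ((k ^ 2 - ω ^ 2 / Cs ^ 2 : ℝ) : ℂ) ^ (1 / 2 : ℂ))
    (hl2 : l2 = ((k ^ 2 - ω ^ 2 / Cp ^ 2 : ℝ) : ℂ) ^ (1 / 2 : ℂ))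
    (hk : (0 ≤ k ∧ k ≤ ω / Cp) ∨ k = ω / Cs)
    (hadmp : (k : ℂ) ^ 2 + l1 * l2 ≠ 0) (hadmm : (k : ℂ) ^ 2 - l1 * l2 ≠ 0) :
    ∃ δ₀ > (0 : ℝ), ∀ δ : ℝ, 0 < δ → δ < δ₀ → rhoCla Cp Cs ω k δ = 1 :=
  schwarz_low_frequencies_stagnate_general μ lam ρ ω hμ hlam hρ Cp Cs hCp hCs k l1 l2 hl1 hl2 hk
    hadmm
end
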